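/- arXiv:2102.06653 — 3 statements merged into one kernel-verified Lean document; each statement's English description precedes it below -/
import Mathlib

section
/- An odd number 2n+1 (with n ≥ 1) is prime if and only if n cannot be written as i + j + 2ij for positive integers i, j with 1 ≤ i ≤ j. -/
theorem sundaram_correct (n : ℕ) (hn : 1 ≤ n) :
    Nat.Prime (2 * n + 1) ↔
      ¬ ∃ i j : ℕ, 1 ≤ i ∧ i ≤ j ∧ n = i + j + 2 * i * j := by
  constructor
  · rintro hp ⟨i, j, hi, hij, hnij⟩
    have hdvd : (2 * i + 1) ∣ (2 * n + 1) := ⟨2 * j + 1, by subst hnij; ring⟩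
    rcases (Nat.Prime.eq_one_or_self_of_dvd hp _ hdvd) with h | h
    · omega
    · nlinarith
  · intro h
    by_contra hnp
    obtain ⟨m, hmdvd, hm2, hmlt⟩ := Nat.exists_dvd_of_not_prime2 (by omega) hnp
    obtain ⟨k, hk⟩ := hmdvd
    have hmodd : m % 2 = 1 := by
      rcases Nat.even_or_odd m with he | ho
      · have h2 : Even (m * k) := he.mul_right k
        rw [← hk] at h2
        simp [Nat.even_iff] at h2
      · exact Nat.odd_iff.mp ho
    have hkodd : k % 2 = 1 := by
      rcases Nat.even_or_odd k with he | ho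
      · have h2 : Even (m * k) := he.mul_left m
        rw [← hk] at h2
        simp [Nat.even_iff] at h2
      · exact Nat.odd_iff.mp ho
    have hkne1 : k ≠ 1 := by rintro rfl; simp at hk; omega
    set i := (m - 1) / 2 with hi
    set j := (k - 1) / 2 with hj
    have hmi : m = 2 * i + 1 := by omega
    have hkj : k = 2 * j + 1 := by omega
    have hi1 : 1 ≤ i := by omega
    have hj1 : 1 ≤ j := by omega
    have hprod : 2 * n + 1 = (2 * i + 1) * (2 * j + 1) := by rw [← hmi, ← hkj]; exact hk
    have hne : n = i + j + 2 * i * j := by nlinarith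
    rcases le_total i j with hle | hle
    · exact h ⟨i, j, hi1, hle, hne⟩
    · exact h ⟨j, i, hj1, hle, by rw [hne]; ring⟩
end

section
/- If n ≥ 1 and 2n+1 is composite, then there exist positive integers i ≤ j with n = i + j + 2ij. -/
theorem sundaram_of_composite (n : ℕ) (hn : 1 ≤ n)
    (h : ∃ d : ℕ, 1 < d ∧ d < 2 * n + 1 ∧ d ∣ 2 * n + 1) :
    ∃ i j : ℕ, 1 ≤ i ∧ i ≤ j ∧ n = i + j + 2 * i * j := by
  obtain ⟨d, hd1, hdlt, e, he⟩ := h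
  have hdodd : Odd d := by
    rcases Nat.even_or_odd d with hev | hod
    · exfalso
      have : (2 : ℕ) ∣ 2 * n + 1 := dvd_trans hev.two_dvd ⟨e, he⟩
      omega
    · exact hod
  have heodd : Odd e := by
    rcases Nat.even_or_odd e with hev | hod
    · exfalso
      have : (2 : ℕ) ∣ 2 * n + 1 := he ▸ Dvd.dvd.mul_left hev.two_dvd d
      omega
    · exact hod
  obtain ⟨a, ha⟩ := hdodd
  obtain ⟨b, hb⟩ := heodd
  have ha1 : 1 ≤ a := by nlinarith
  have hb1 : 1 ≤ b := by nlinarith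
  have hn' : n = a + b + 2 * a * b := by nlinarith
  rcases le_total a b with hab | hab
  · exact ⟨a, b, ha1, hab, hn'⟩
  · exact ⟨b, a, hb1, hab, by linarith [hn']; ⟩
end

section
/- For positive integers b and z with z = ⌊(3b+1)/2⌋, setting g = ⌈(4(z²+z)−1)/3⌉, we have 2⌊(3g+1)/2⌋ + 1 = (2z+1)². -/
theorem first_multiple_index_D2 (b : ℕ) (hb : 0 < b) (z : ℕ)
    (hz : z = (3 * b + 1) / 2) (g : ℕ)
    (hg : (g : ℤ) = ⌈(4 * ((z : ℚ) ^ 2 + z) - 1) / 3⌉) :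
    2 * ((3 * g + 1) / 2) + 1 = (2 * z + 1) ^ 2 := by
  obtain ⟨k, hk⟩ : ∃ k, z = 3 * k ∨ z = 3 * k + 2 := ⟨z / 3, by omega⟩
  have h3 : 3 ∣ z ^ 2 + z := by
    rcases hk with rfl | rfl
    · exact ⟨3 * k ^ 2 + k, by ring⟩
    · exact ⟨3 * k ^ 2 + 5 * k + 2, by ring⟩
  obtain ⟨c, hc⟩ := h3
  have hgc : (g : ℤ) = 4 * c := by
    rw [hg]
    have hq : (4 * ((z : ℚ) ^ 2 + z) - 1) / 3 = ((4 * c : ℤ) : ℚ) - 1 / 3 := by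
      have hzc : ((z : ℚ) ^ 2 + z) = 3 * c := by exact_mod_cast congrArg (Nat.cast (R := ℚ)) hc
      rw [hzc]; push_cast; ring
    rw [hq]
    rw [Int.ceil_eq_iff]
    constructor <;> push_cast <;> norm_num
  have hg4 : g = 4 * c := by exact_mod_cast hgc
  have key : (2 * z + 1) ^ 2 = 4 * (z ^ 2 + z) + 1 := by ring
  rw [key, hc]
  omega
end
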